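/- arXiv:2207.05930 — 4 statements merged into one kernel-verified Lean document; each statement's English description precedes it below -/
import Mathlib

section
/- Let Q be a finite quasigroup with |Q| = n. Then the Latin square graph of Q is strongly regular with parameters (n^2, 3(n-1), n, 6); that is, it has n^2 vertices, is 3(n-1)-regular, any two adjacent vertices have exactly n common neighbors, and any two distinct non-adjacent vertices have exactly 6 common neighbors. -/
open Finset

/-- The Latin square graph of a (quasi)group-like binary structure `Q`:
vertices are pairs `(a, b) : Q × Q`, and distinct vertices `(a, b)` and `(x, y)`
are adjacent iff `a = x`, or `b = y`, or `a * b = x * y`. -/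
def latinSquareGraph (Q : Type*) [Mul Q] : SimpleGraph (Q × Q) where
  Adj p q := p ≠ q ∧ (p.1 = q.1 ∨ p.2 = q.2 ∨ p.1 * p.2 = q.1 * q.2)
  symm := by
    constructor
    rintro p q ⟨hne, h⟩
    exact ⟨hne.symm, h.imp Eq.symm (Or.imp Eq.symm Eq.symm)⟩
  loopless := ⟨fun p h => h.1 rfl⟩

instance latinSquareGraph.instDecidableRelAdj (Q : Type*) [Mul Q] [DecidableEq Q] :
    DecidableRel (latinSquareGraph Q).Adj := fun p q =>
  inferInstanceAs (Decidable (p ≠ q ∧ (p.1 = q.1 ∨ p.2 = q.2 ∨ p.1 * p.2 = q.1 * q.2)))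

section Aux

variable {Q : Type*} [Fintype Q] [DecidableEq Q] [Mul Q]

omit [Fintype Q] [DecidableEq Q] in
lemma lsg_adj' (p q : Q × Q) :
    (latinSquareGraph Q).Adj p q ↔ ¬(p = q) ∧ (p.1 = q.1 ∨ p.2 = q.2 ∨ p.1 * p.2 = q.1 * q.2) :=
  Iff.rfl

lemma lsg_card_common (p q : Q × Q) :
    Fintype.card ((latinSquareGraph Q).commonNeighbors p q) =
      (univ.filter fun z => (latinSquareGraph Q).Adj p z ∧ (latinSquareGraph Q).Adj q z).card := by
  rw [← Fintype.card_subtype]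
  exact Fintype.card_congr
    (Equiv.subtypeEquivRight fun z => SimpleGraph.mem_commonNeighbors _)

lemma lsg_degree
    (hleft : ∀ a : Q, Function.Bijective (fun x : Q => a * x))
    (hright : ∀ a : Q, Function.Bijective (fun x : Q => x * a))
    (p : Q × Q) :
    (latinSquareGraph Q).degree p = 3 * (Fintype.card Q - 1) := by
  classical
  set R : Finset (Q × Q) := univ.filter fun z => z.1 = p.1 with hR
  set C : Finset (Q × Q) := univ.filter fun z => z.2 = p.2 with hC
  set S : Finset (Q × Q) := univ.filter fun z => z.1 * z.2 = p.1 * p.2 with hS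
  have hpR : p ∈ R := by simp [hR]
  have hpC : p ∈ C := by simp [hC]
  have hpS : p ∈ S := by simp [hS]
  have hN : (latinSquareGraph Q).neighborFinset p = (R.erase p ∪ C.erase p) ∪ S.erase p := by
    ext z
    simp only [SimpleGraph.mem_neighborFinset, lsg_adj', mem_union, mem_erase, hR, hC, hS,
      mem_filter, mem_univ, true_and]
    constructor
    · rintro ⟨hne, h | h | h⟩
      · exact Or.inl (Or.inl ⟨fun e => hne (e ▸ rfl), h.symm⟩)
      · exact Or.inl (Or.inr ⟨fun e => hne (e ▸ rfl), h.symm⟩)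
      · exact Or.inr ⟨fun e => hne (e ▸ rfl), h.symm⟩
    · rintro ((⟨hne, h⟩ | ⟨hne, h⟩) | ⟨hne, h⟩) <;>
        exact ⟨fun e => hne (e ▸ rfl), by simp [h]⟩
  have hRcard : R.card = Fintype.card Q := by
    have : R = univ.image fun y : Q => (p.1, y) := by
      ext z
      simp only [hR, mem_filter, mem_univ, true_and, mem_image]
      constructor
      · intro h; exact ⟨z.2, by rw [← h]⟩
      · rintro ⟨y, rfl⟩; rfl
    rw [this, Finset.card_image_of_injective _ (fun y y' h => congrArg Prod.snd h), card_univ]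
  have hCcard : C.card = Fintype.card Q := by
    have : C = univ.image fun x : Q => (x, p.2) := by
      ext z
      simp only [hC, mem_filter, mem_univ, true_and, mem_image]
      constructor
      · intro h; exact ⟨z.1, by rw [← h]⟩
      · rintro ⟨y, rfl⟩; rfl
    rw [this, Finset.card_image_of_injective _ (fun y y' h => congrArg Prod.fst h), card_univ]
  have hScard : S.card = Fintype.card Q := by
    have : S = univ.image fun x : Q => (x, Function.surjInv (hleft x).2 (p.1 * p.2)) := by
      ext z
      simp only [hS, mem_filter, mem_univ, true_and, mem_image]
      constructor
      · intro h
        refine ⟨z.1, ?_⟩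
        have h2 : z.1 * Function.surjInv (hleft z.1).2 (p.1 * p.2) = p.1 * p.2 :=
          Function.surjInv_eq (hleft z.1).2 (p.1 * p.2)
        have := (hleft z.1).1 (show z.1 * Function.surjInv (hleft z.1).2 (p.1 * p.2) = z.1 * z.2 by
          rw [h2, h])
        rw [this]
      · rintro ⟨x, rfl⟩
        exact Function.surjInv_eq (hleft x).2 (p.1 * p.2)
    rw [this, Finset.card_image_of_injective _ (fun y y' h => by
      have h1 := congrArg Prod.fst h
      simp only at h1
      exact h1), card_univ]
  have hd1 : Disjoint (R.erase p) (C.erase p) := by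
    rw [Finset.disjoint_left]
    rintro z hz hz'
    simp only [mem_erase, hR, hC, mem_filter, mem_univ, true_and] at hz hz'
    exact hz.1 (Prod.ext hz.2 hz'.2)
  have hd2 : Disjoint (R.erase p ∪ C.erase p) (S.erase p) := by
    rw [Finset.disjoint_left]
    rintro z hz hz'
    simp only [mem_union, mem_erase, hR, hC, hS, mem_filter, mem_univ, true_and] at hz hz'
    rcases hz with ⟨hne, h⟩ | ⟨hne, h⟩
    · exact hne (Prod.ext h ((hleft p.1).1 (by rw [← h] at hz' ⊢; exact hz'.2)))
    · exact hne (Prod.ext ((hright p.2).1 (by rw [← h] at hz' ⊢; exact hz'.2)) h)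
  rw [SimpleGraph.degree, hN, Finset.card_union_of_disjoint hd2,
    Finset.card_union_of_disjoint hd1, Finset.card_erase_of_mem hpR,
    Finset.card_erase_of_mem hpC, Finset.card_erase_of_mem hpS, hRcard, hCcard, hScard]
  omega

lemma lsg_common_row
    (hleft : ∀ a : Q, Function.Bijective (fun x : Q => a * x))
    (hright : ∀ a : Q, Function.Bijective (fun x : Q => x * a))
    (a b c : Q) (hbc : b ≠ c) :
    (univ.filter fun z : Q × Q =>
        (latinSquareGraph Q).Adj (a, b) z ∧ (latinSquareGraph Q).Adj (a, c) z).card =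
      Fintype.card Q := by
  classical
  obtain ⟨x1, hx1⟩ := (hright b).2 (a * c)
  obtain ⟨x2, hx2⟩ := (hright c).2 (a * b)
  simp only at hx1 hx2
  have hx1a : x1 ≠ a := fun h => hbc ((hleft a).1 (show a * b = a * c by rw [← hx1, h]))
  have hx2a : x2 ≠ a := fun h => hbc ((hleft a).1 (show a * b = a * c by rw [← hx2, h]))
  set g : Q → Q × Q := fun y => if y = b then (x1, b) else if y = c then (x2, c) else (a, y)
    with hg
  have hsnd : ∀ y, (g y).2 = y := by
    intro y
    simp only [hg]
    split_ifs with h1 h2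
    · exact h1.symm
    · exact h2.symm
    · rfl
  have hginj : Function.Injective g := fun y y' h => by rw [← hsnd y, ← hsnd y', h]
  have hset : (univ.filter fun z : Q × Q =>
      (latinSquareGraph Q).Adj (a, b) z ∧ (latinSquareGraph Q).Adj (a, c) z) = univ.image g := by
    ext z
    simp only [mem_filter, mem_univ, true_and, mem_image, lsg_adj']
    constructor
    · rintro ⟨⟨hne1, h1 | h1 | h1⟩, ⟨hne2, h2 | h2 | h2⟩⟩
      · -- a = z.1, a = z.1
        have hz2b : z.2 ≠ b := fun h => hne1 (Prod.ext h1 h.symm)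
        have hz2c : z.2 ≠ c := fun h => hne2 (Prod.ext h1 h.symm)
        refine ⟨z.2, ?_⟩
        simp only [hg, if_neg hz2b, if_neg hz2c]
        exact Prod.ext h1 rfl
      · exact absurd (Prod.ext h1 h2) hne2
      · have : c = z.2 := (hleft a).1 (show a * c = a * z.2 by rw [h2, ← h1])
        exact absurd (Prod.ext h1 this) hne2
      · exact absurd (Prod.ext h2 h1) hne1
      · exact absurd (h1.trans h2.symm) hbc
      · -- b = z.2, a*c = z.1*z.2
        have hux1 : x1 = z.1 := (hright b).1 (show x1 * b = z.1 * b by rw [hx1, h2, ← h1])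
        exact ⟨b, by simp only [hg, if_pos rfl]; exact Prod.ext hux1 h1⟩
      · have : b = z.2 := (hleft a).1 (show a * b = a * z.2 by rw [h1, ← h2])
        exact absurd (Prod.ext h2 this) hne1
      · have hux2 : x2 = z.1 := (hright c).1 (show x2 * c = z.1 * c by rw [hx2, h1, ← h2])
        exact ⟨c, by simp only [hg, if_neg (Ne.symm hbc), if_pos rfl]; exact Prod.ext hux2 h2⟩
      · exact absurd ((hleft a).1 (h1.trans h2.symm)) hbc
    · rintro ⟨y, rfl⟩
      by_cases h1 : y = b
      · have hgv : g y = (x1, b) := by simp only [hg, if_pos h1]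
        rw [hgv]
        exact ⟨⟨fun h => hx1a (congrArg Prod.fst h).symm, Or.inr (Or.inl rfl)⟩,
          ⟨fun h => hbc (congrArg Prod.snd h).symm, Or.inr (Or.inr hx1.symm)⟩⟩
      · by_cases h2 : y = c
        · have hgv : g y = (x2, c) := by simp only [hg, if_neg h1, if_pos h2]
          rw [hgv]
          exact ⟨⟨fun h => hbc (congrArg Prod.snd h), Or.inr (Or.inr hx2.symm)⟩,
            ⟨fun h => hx2a (congrArg Prod.fst h).symm, Or.inr (Or.inl rfl)⟩⟩
        · have hgv : g y = (a, y) := by simp only [hg, if_neg h1, if_neg h2]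
          rw [hgv]
          exact ⟨⟨fun h => h1 (congrArg Prod.snd h).symm, Or.inl rfl⟩,
            ⟨fun h => h2 (congrArg Prod.snd h).symm, Or.inl rfl⟩⟩
  rw [hset, Finset.card_image_of_injective _ hginj, card_univ]
lemma lsg_common_col
    (hleft : ∀ a : Q, Function.Bijective (fun x : Q => a * x))
    (hright : ∀ a : Q, Function.Bijective (fun x : Q => x * a))
    (a b c : Q) (hac : a ≠ c) :
    (univ.filter fun z : Q × Q =>
        (latinSquareGraph Q).Adj (a, b) z ∧ (latinSquareGraph Q).Adj (c, b) z).card =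
      Fintype.card Q := by
  classical
  obtain ⟨y1, hy1⟩ := (hleft a).2 (c * b)
  obtain ⟨y2, hy2⟩ := (hleft c).2 (a * b)
  simp only at hy1 hy2
  have hy1b : y1 ≠ b := fun h => hac ((hright b).1 (show a * b = c * b by rw [← hy1, h]))
  have hy2b : y2 ≠ b := fun h => hac ((hright b).1 (show a * b = c * b by rw [← hy2, h]))
  set g : Q → Q × Q := fun x => if x = a then (a, y1) else if x = c then (c, y2) else (x, b)
    with hg
  have hfst : ∀ x, (g x).1 = x := by
    intro x
    simp only [hg]
    split_ifs with h1 h2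
    · exact h1.symm
    · exact h2.symm
    · rfl
  have hginj : Function.Injective g := fun y y' h => by rw [← hfst y, ← hfst y', h]
  have hset : (univ.filter fun z : Q × Q =>
      (latinSquareGraph Q).Adj (a, b) z ∧ (latinSquareGraph Q).Adj (c, b) z) = univ.image g := by
    ext z
    simp only [mem_filter, mem_univ, true_and, mem_image, lsg_adj']
    constructor
    · rintro ⟨⟨hne1, h1 | h1 | h1⟩, ⟨hne2, h2 | h2 | h2⟩⟩
      · exact absurd (h1.trans h2.symm) hac
      · exact absurd (Prod.ext h1 h2) hne1
      · have : y1 = z.2 := (hleft a).1 (show a * y1 = a * z.2 by rw [hy1, h2, ← h1])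
        exact ⟨a, by simp only [hg, if_pos rfl]; exact Prod.ext h1 this⟩
      · exact absurd (Prod.ext h2 h1) hne2
      · have hz1a : ¬(z.1 = a) := fun h => hne1 (Prod.ext h.symm h1)
        have hz1c : ¬(z.1 = c) := fun h => hne2 (Prod.ext h.symm h2)
        refine ⟨z.1, ?_⟩
        simp only [hg, if_neg hz1a, if_neg hz1c]
        exact Prod.ext rfl h1
      · have : c = z.1 := (hright b).1 (show c * b = z.1 * b by rw [h2, ← h1])
        exact absurd (Prod.ext this h1) hne2
      · have : y2 = z.2 := (hleft c).1 (show c * y2 = c * z.2 by rw [hy2, h1, ← h2])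
        exact ⟨c, by simp only [hg, if_neg (Ne.symm hac), if_pos rfl]; exact Prod.ext h2 this⟩
      · have : a = z.1 := (hright b).1 (show a * b = z.1 * b by rw [h1, ← h2])
        exact absurd (Prod.ext this h2) hne1
      · exact absurd ((hright b).1 (h1.trans h2.symm)) hac
    · rintro ⟨x, rfl⟩
      by_cases h1 : x = a
      · have hgv : g x = (a, y1) := by simp only [hg, if_pos h1]
        rw [hgv]
        exact ⟨⟨fun h => hy1b (congrArg Prod.snd h).symm, Or.inl rfl⟩,
          ⟨fun h => hac (congrArg Prod.fst h).symm, Or.inr (Or.inr hy1.symm)⟩⟩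
      · by_cases h2 : x = c
        · have hgv : g x = (c, y2) := by simp only [hg, if_neg h1, if_pos h2]
          rw [hgv]
          exact ⟨⟨fun h => hac (congrArg Prod.fst h), Or.inr (Or.inr hy2.symm)⟩,
            ⟨fun h => hy2b (congrArg Prod.snd h).symm, Or.inl rfl⟩⟩
        · have hgv : g x = (x, b) := by simp only [hg, if_neg h1, if_neg h2]
          rw [hgv]
          exact ⟨⟨fun h => h1 (congrArg Prod.fst h).symm, Or.inr (Or.inl rfl)⟩,
            ⟨fun h => h2 (congrArg Prod.fst h).symm, Or.inr (Or.inl rfl)⟩⟩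
  rw [hset, Finset.card_image_of_injective _ hginj, card_univ]

lemma lsg_common_cell
    (hleft : ∀ a : Q, Function.Bijective (fun x : Q => a * x))
    (hright : ∀ a : Q, Function.Bijective (fun x : Q => x * a))
    (a b x0 y0 : Q) (hmul : a * b = x0 * y0) (hax : a ≠ x0) (hby : b ≠ y0) :
    (univ.filter fun z : Q × Q =>
        (latinSquareGraph Q).Adj (a, b) z ∧ (latinSquareGraph Q).Adj (x0, y0) z).card =
      Fintype.card Q := by
  classical
  set s : Q → Q := fun x => Function.surjInv (hleft x).2 (a * b) with hsdef
  have hs : ∀ x, x * s x = a * b := fun x => Function.surjInv_eq (hleft x).2 _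
  set g : Q → Q × Q := fun x => if x = a then (a, y0) else if x = x0 then (x0, b) else (x, s x)
    with hg
  have hfst : ∀ x, (g x).1 = x := by
    intro x
    simp only [hg]
    split_ifs with h1 h2
    · exact h1.symm
    · exact h2.symm
    · rfl
  have hginj : Function.Injective g := fun y y' h => by rw [← hfst y, ← hfst y', h]
  have hset : (univ.filter fun z : Q × Q =>
      (latinSquareGraph Q).Adj (a, b) z ∧ (latinSquareGraph Q).Adj (x0, y0) z) = univ.image g := by
    ext z
    simp only [mem_filter, mem_univ, true_and, mem_image, lsg_adj']
    constructor
    · rintro ⟨⟨hne1, h1 | h1 | h1⟩, ⟨hne2, h2 | h2 | h2⟩⟩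
      · exact absurd (h1.trans h2.symm) hax
      · exact ⟨a, by simp only [hg, if_pos rfl]; exact Prod.ext h1 h2⟩
      · have : b = z.2 := (hleft a).1 (show a * b = a * z.2 by rw [hmul, h2, ← h1])
        exact absurd (Prod.ext h1 this) hne1
      · exact ⟨x0, by simp only [hg, if_neg (Ne.symm hax), if_pos rfl]; exact Prod.ext h2 h1⟩
      · exact absurd (h1.trans h2.symm) hby
      · have : a = z.1 := (hright b).1 (show a * b = z.1 * b by rw [hmul, h2, ← h1])
        exact absurd (Prod.ext this h1) hne1
      · have : y0 = z.2 := (hleft x0).1 (show x0 * y0 = x0 * z.2 by rw [← hmul, h1, ← h2])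
        exact absurd (Prod.ext h2 this) hne2
      · have : x0 = z.1 := (hright y0).1 (show x0 * y0 = z.1 * y0 by rw [← hmul, h1, ← h2])
        exact absurd (Prod.ext this h2) hne2
      · have hz1a : ¬(z.1 = a) :=
          fun h => hne1 (Prod.ext h.symm ((hleft a).1 (show a * b = a * z.2 by rw [h1, h])))
        have hz1x0 : ¬(z.1 = x0) :=
          fun h => hne2 (Prod.ext h.symm
            ((hleft x0).1 (show x0 * y0 = x0 * z.2 by rw [← hmul, h1, h])))
        refine ⟨z.1, ?_⟩
        simp only [hg, if_neg hz1a, if_neg hz1x0]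
        have : s z.1 = z.2 := (hleft z.1).1
          (show z.1 * s z.1 = z.1 * z.2 by rw [hs z.1, h1])
        exact Prod.ext rfl this
    · rintro ⟨x, rfl⟩
      by_cases h1 : x = a
      · have hgv : g x = (a, y0) := by simp only [hg, if_pos h1]
        rw [hgv]
        exact ⟨⟨fun h => hby (congrArg Prod.snd h), Or.inl rfl⟩,
          ⟨fun h => hax (congrArg Prod.fst h).symm, Or.inr (Or.inl rfl)⟩⟩
      · by_cases h2 : x = x0
        · have hgv : g x = (x0, b) := by simp only [hg, if_neg h1, if_pos h2]
          rw [hgv]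
          exact ⟨⟨fun h => hax (congrArg Prod.fst h), Or.inr (Or.inl rfl)⟩,
            ⟨fun h => hby (congrArg Prod.snd h).symm, Or.inl rfl⟩⟩
        · have hgv : g x = (x, s x) := by simp only [hg, if_neg h1, if_neg h2]
          rw [hgv]
          exact ⟨⟨fun h => h1 (congrArg Prod.fst h).symm, Or.inr (Or.inr (hs x).symm)⟩,
            ⟨fun h => h2 (congrArg Prod.fst h).symm,
              Or.inr (Or.inr (hmul.symm.trans (hs x).symm))⟩⟩
  rw [hset, Finset.card_image_of_injective _ hginj, card_univ]

lemma lsg_common_nonadj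
    (hleft : ∀ a : Q, Function.Bijective (fun x : Q => a * x))
    (hright : ∀ a : Q, Function.Bijective (fun x : Q => x * a))
    (a b x0 y0 : Q) (hax : a ≠ x0) (hby : b ≠ y0) (hab : a * b ≠ x0 * y0) :
    (univ.filter fun z : Q × Q =>
        (latinSquareGraph Q).Adj (a, b) z ∧ (latinSquareGraph Q).Adj (x0, y0) z).card = 6 := by
  classical
  obtain ⟨y2, hy2⟩ := (hleft a).2 (x0 * y0)
  obtain ⟨x4, hx4⟩ := (hright b).2 (x0 * y0)
  obtain ⟨y5, hy5⟩ := (hleft x0).2 (a * b)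
  obtain ⟨x6, hx6⟩ := (hright y0).2 (a * b)
  simp only at hy2 hx4 hy5 hx6
  have hy2y0 : y2 ≠ y0 := fun h => hax ((hright y0).1 (show a * y0 = x0 * y0 by rw [← hy2, h]))
  have hy2b : y2 ≠ b := fun h => hab (show a * b = x0 * y0 by rw [← hy2, h])
  have hx4x0 : x4 ≠ x0 := fun h => hby ((hleft x0).1 (show x0 * b = x0 * y0 by rw [← hx4, h]))
  have hx4a : x4 ≠ a := fun h => hab (show a * b = x0 * y0 by rw [← hx4, h])
  have hy5b : y5 ≠ b := fun h => hax ((hright b).1 (show a * b = x0 * b by rw [← hy5, h]))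
  have hy5y0 : y5 ≠ y0 := fun h => hab (show a * b = x0 * y0 by rw [← hy5, h])
  have hx6a : x6 ≠ a := fun h => hby ((hleft a).1 (show a * b = a * y0 by rw [← hx6, h]))
  have hx6x0 : x6 ≠ x0 := fun h => hab (show a * b = x0 * y0 by rw [← hx6, h])
  have hset : (univ.filter fun z : Q × Q =>
      (latinSquareGraph Q).Adj (a, b) z ∧ (latinSquareGraph Q).Adj (x0, y0) z) =
      ({(a, y0), (a, y2), (x0, b), (x4, b), (x0, y5), (x6, y0)} : Finset (Q × Q)) := by
    ext z
    simp only [mem_filter, mem_univ, true_and, lsg_adj', mem_insert, mem_singleton]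
    constructor
    · rintro ⟨⟨hne1, h1 | h1 | h1⟩, ⟨hne2, h2 | h2 | h2⟩⟩
      · exact absurd (h1.trans h2.symm) hax
      · exact Or.inl (Prod.ext h1 h2).symm
      · have : y2 = z.2 := (hleft a).1 (show a * y2 = a * z.2 by rw [hy2, h2, ← h1])
        exact Or.inr (Or.inl (Prod.ext h1 this).symm)
      · exact Or.inr (Or.inr (Or.inl (Prod.ext h2 h1).symm))
      · exact absurd (h1.trans h2.symm) hby
      · have : x4 = z.1 := (hright b).1 (show x4 * b = z.1 * b by rw [hx4, h2, ← h1])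
        exact Or.inr (Or.inr (Or.inr (Or.inl (Prod.ext this h1).symm)))
      · have : y5 = z.2 := (hleft x0).1 (show x0 * y5 = x0 * z.2 by rw [hy5, h1, ← h2])
        exact Or.inr (Or.inr (Or.inr (Or.inr (Or.inl (Prod.ext h2 this).symm))))
      · have : x6 = z.1 := (hright y0).1 (show x6 * y0 = z.1 * y0 by rw [hx6, h1, ← h2])
        exact Or.inr (Or.inr (Or.inr (Or.inr (Or.inr (Prod.ext this h2).symm))))
      · exact absurd (h1.trans h2.symm) hab
    · rintro (rfl | rfl | rfl | rfl | rfl | rfl)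
      · exact ⟨⟨fun h => hby (congrArg Prod.snd h), Or.inl rfl⟩,
          ⟨fun h => hax (congrArg Prod.fst h).symm, Or.inr (Or.inl rfl)⟩⟩
      · exact ⟨⟨fun h => hy2b (congrArg Prod.snd h).symm, Or.inl rfl⟩,
          ⟨fun h => hax (congrArg Prod.fst h).symm, Or.inr (Or.inr hy2.symm)⟩⟩
      · exact ⟨⟨fun h => hax (congrArg Prod.fst h), Or.inr (Or.inl rfl)⟩,
          ⟨fun h => hby (congrArg Prod.snd h).symm, Or.inl rfl⟩⟩
      · exact ⟨⟨fun h => hx4a (congrArg Prod.fst h).symm, Or.inr (Or.inl rfl)⟩,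
          ⟨fun h => hx4x0 (congrArg Prod.fst h).symm, Or.inr (Or.inr hx4.symm)⟩⟩
      · exact ⟨⟨fun h => hax (congrArg Prod.fst h), Or.inr (Or.inr hy5.symm)⟩,
          ⟨fun h => hy5y0 (congrArg Prod.snd h).symm, Or.inl rfl⟩⟩
      · exact ⟨⟨fun h => hx6a (congrArg Prod.fst h).symm, Or.inr (Or.inr hx6.symm)⟩,
          ⟨fun h => hx6x0 (congrArg Prod.fst h).symm, Or.inr (Or.inl rfl)⟩⟩
  have c1 : ((a, y0) : Q × Q) ∉
      ({(a, y2), (x0, b), (x4, b), (x0, y5), (x6, y0)} : Finset (Q × Q)) := by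
    intro hm
    simp only [mem_insert, mem_singleton] at hm
    rcases hm with h | h | h | h | h
    · exact hy2y0 (congrArg Prod.snd h).symm
    · exact hax (congrArg Prod.fst h)
    · exact hby (congrArg Prod.snd h).symm
    · exact hax (congrArg Prod.fst h)
    · exact hx6a (congrArg Prod.fst h).symm
  have c2 : ((a, y2) : Q × Q) ∉ ({(x0, b), (x4, b), (x0, y5), (x6, y0)} : Finset (Q × Q)) := by
    intro hm
    simp only [mem_insert, mem_singleton] at hm
    rcases hm with h | h | h | h
    · exact hax (congrArg Prod.fst h)
    · exact hy2b (congrArg Prod.snd h)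
    · exact hax (congrArg Prod.fst h)
    · exact hy2y0 (congrArg Prod.snd h)
  have c3 : ((x0, b) : Q × Q) ∉ ({(x4, b), (x0, y5), (x6, y0)} : Finset (Q × Q)) := by
    intro hm
    simp only [mem_insert, mem_singleton] at hm
    rcases hm with h | h | h
    · exact hx4x0 (congrArg Prod.fst h).symm
    · exact hy5b (congrArg Prod.snd h).symm
    · exact hby (congrArg Prod.snd h)
  have c4 : ((x4, b) : Q × Q) ∉ ({(x0, y5), (x6, y0)} : Finset (Q × Q)) := by
    intro hm
    simp only [mem_insert, mem_singleton] at hm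
    rcases hm with h | h
    · exact hx4x0 (congrArg Prod.fst h)
    · exact hby (congrArg Prod.snd h)
  have c5 : ((x0, y5) : Q × Q) ∉ ({(x6, y0)} : Finset (Q × Q)) := by
    intro hm
    simp only [mem_singleton] at hm
    exact hy5y0 (congrArg Prod.snd hm)
  rw [hset, card_insert_of_notMem c1, card_insert_of_notMem c2, card_insert_of_notMem c3,
    card_insert_of_notMem c4, card_insert_of_notMem c5, card_singleton]

end Aux

/-- Let `Q` be a finite quasigroup with `|Q| = n`.  Then the Latin square graph of `Q`
is strongly regular with parameters `(n^2, 3(n-1), n, 6)`. -/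
theorem latinSquareGraph_isSRGWith (Q : Type*) [Fintype Q] [DecidableEq Q] [Mul Q]
    (hleft : ∀ a : Q, Function.Bijective (fun x : Q => a * x))
    (hright : ∀ a : Q, Function.Bijective (fun x : Q => x * a))
    (n : ℕ) (hn : Fintype.card Q = n) :
    (latinSquareGraph Q).IsSRGWith (n ^ 2) (3 * (n - 1)) n 6 := by
  constructor
  · rw [Fintype.card_prod, hn, sq]
  · intro v
    rw [lsg_degree hleft hright v, hn]
  · rintro ⟨a, b⟩ ⟨x, y⟩ h
    rw [lsg_card_common]
    rcases h with ⟨hne, h | h | h⟩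
    · obtain rfl : a = x := h
      have hby : b ≠ y := fun hh => hne (Prod.ext rfl hh)
      rw [lsg_common_row hleft hright a b y hby, hn]
    · obtain rfl : b = y := h
      have hax : a ≠ x := fun hh => hne (Prod.ext hh rfl)
      rw [lsg_common_col hleft hright a b x hax, hn]
    · have hax : a ≠ x := by
        intro hh; subst hh
        exact hne (Prod.ext rfl ((hleft a).1 h))
      have hby : b ≠ y := by
        intro hh; subst hh
        exact hne (Prod.ext ((hright b).1 h) rfl)
      rw [lsg_common_cell hleft hright a b x y h hax hby, hn]
  · rintro ⟨a, b⟩ ⟨x, y⟩ hne hnadj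
    rw [lsg_card_common]
    have h3 : ¬(a = x ∨ b = y ∨ a * b = x * y) := fun hh => hnadj ⟨hne, hh⟩
    push_neg at h3
    exact lsg_common_nonadj hleft hright a b x y h3.1 h3.2.1 h3.2.2
end

section
/- Let (X,B) be a Steiner triple system on v points with 3 ≤ v, and let G be its block-intersection graph. Then 6·|B| = v·(v-1), and for all natural numbers d and l satisfying 2d = 3(v-3) and 2l = v+3, the graph G is strongly regular with parameters (|B|, d, l, 9). -/
/-- The block-intersection graph of a family `B` of blocks: vertices are the blocks,
and two distinct blocks are adjacent iff they have nonempty intersection. -/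
def blockIntersectionGraph {X : Type*} [DecidableEq X] (B : Finset (Finset X)) :
    SimpleGraph {b // b ∈ B} where
  Adj b c := b ≠ c ∧ ((b : Finset X) ∩ (c : Finset X)).Nonempty
  symm := ⟨by
    rintro b c ⟨hne, h⟩
    exact ⟨hne.symm, by rwa [Finset.inter_comm]⟩⟩
  loopless := ⟨fun b h => h.1 rfl⟩

instance blockIntersectionGraph.instDecidableRelAdj {X : Type*} [DecidableEq X]
    (B : Finset (Finset X)) : DecidableRel (blockIntersectionGraph B).Adj := fun b c =>
  inferInstanceAs (Decidable (b ≠ c ∧ ((b : Finset X) ∩ (c : Finset X)).Nonempty))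

set_option linter.unusedSectionVars false

section aux
variable {X : Type*} [Fintype X] [DecidableEq X] {B : Finset (Finset X)}

/-- Two blocks sharing two distinct points are equal. -/
lemma sts_eq_of_two (hpair : ∀ p : Finset X, p.card = 2 → ∃! b, b ∈ B ∧ p ⊆ b)
    {a b : Finset X} (ha : a ∈ B) (hb : b ∈ B) {x y : X} (hxy : x ≠ y)
    (hxa : x ∈ a) (hya : y ∈ a) (hxb : x ∈ b) (hyb : y ∈ b) : a = b := by
  obtain ⟨t, -, ht⟩ := hpair {x, y} (Finset.card_pair hxy)
  have h1 : a = t := ht a ⟨ha, by simp [Finset.insert_subset_iff, hxa, hya]⟩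
  have h2 : b = t := ht b ⟨hb, by simp [Finset.insert_subset_iff, hxb, hyb]⟩
  exact h1.trans h2.symm

/-- The unique block through a pair, as a filter identity. -/
lemma sts_filter_pair (hpair : ∀ p : Finset X, p.card = 2 → ∃! b, b ∈ B ∧ p ⊆ b)
    {p q : X} (hpq : p ≠ q) :
    ∃ a, a ∈ B ∧ p ∈ a ∧ q ∈ a ∧ B.filter (fun t => p ∈ t ∧ q ∈ t) = {a} := by
  obtain ⟨a, ⟨haB, hsub⟩, huniq⟩ := hpair {p, q} (Finset.card_pair hpq)
  have hpa : p ∈ a := hsub (by simp)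
  have hqa : q ∈ a := hsub (by simp)
  refine ⟨a, haB, hpa, hqa, ?_⟩
  ext t
  simp only [Finset.mem_filter, Finset.mem_singleton]
  constructor
  · rintro ⟨htB, hp, hq⟩
    exact huniq t ⟨htB, by simp [Finset.insert_subset_iff, hp, hq]⟩
  · rintro rfl
    exact ⟨haB, hpa, hqa⟩

/-- Each point lies in `(v-1)/2` blocks. -/
lemma sts_point_deg {v : ℕ} (hv : Fintype.card X = v)
    (hblock : ∀ b ∈ B, b.card = 3)
    (hpair : ∀ p : Finset X, p.card = 2 → ∃! b, b ∈ B ∧ p ⊆ b) (x : X) :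
    2 * (B.filter fun b => x ∈ b).card = v - 1 := by
  have key : (B.filter fun b => x ∈ b).biUnion (fun b => b.erase x)
      = Finset.univ.erase x := by
    ext y
    simp only [Finset.mem_biUnion, Finset.mem_filter, Finset.mem_erase, Finset.mem_univ,
      and_true]
    constructor
    · rintro ⟨b, ⟨-, hxb⟩, hy, -⟩; exact hy
    · intro hyx
      obtain ⟨b, ⟨hbB, hsub⟩, -⟩ := hpair {x, y} (Finset.card_pair (Ne.symm hyx))
      exact ⟨b, ⟨hbB, hsub (by simp)⟩, hyx, hsub (by simp)⟩
  have hdisj : ∀ b ∈ B.filter fun b => x ∈ b, ∀ c ∈ B.filter fun b => x ∈ b, b ≠ c →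
      Disjoint (b.erase x) (c.erase x) := by
    intro b hb c hc hbc
    rw [Finset.disjoint_left]
    intro z hzb hzc
    rw [Finset.mem_filter] at hb hc
    rw [Finset.mem_erase] at hzb hzc
    exact hbc (sts_eq_of_two hpair hb.1 hc.1 hzb.1 hzb.2 hb.2 hzc.2 hc.2)
  have hcard := Finset.card_biUnion hdisj
  rw [key, Finset.card_erase_of_mem (Finset.mem_univ x), Finset.card_univ, hv] at hcard
  rw [hcard]
  rw [Finset.sum_congr rfl (fun b hb => ?_), Finset.sum_const, smul_eq_mul, mul_comm]
  rw [Finset.mem_filter] at hb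
  rw [Finset.card_erase_of_mem hb.2, hblock b hb.1]

end aux

section aux2
variable {X : Type*} [Fintype X] [DecidableEq X] {B : Finset (Finset X)}

lemma sts_block_count {v : ℕ} (hv : Fintype.card X = v)
    (hblock : ∀ b ∈ B, b.card = 3)
    (hpair : ∀ p : Finset X, p.card = 2 → ∃! b, b ∈ B ∧ p ⊆ b) :
    6 * B.card = v * (v - 1) := by
  have hswap : ∑ x : X, (B.filter fun b => x ∈ b).card = ∑ b ∈ B, b.card := by
    calc ∑ x : X, (B.filter fun b => x ∈ b).card
        = ∑ x : X, ∑ b ∈ B, if x ∈ b then 1 else 0 := by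
          simp only [Finset.card_filter]
      _ = ∑ b ∈ B, ∑ x : X, if x ∈ b then 1 else 0 := Finset.sum_comm
      _ = ∑ b ∈ B, b.card := by
          refine Finset.sum_congr rfl fun b _ => ?_
          rw [← Finset.card_filter]
          congr 1
          ext y
          simp only [Finset.mem_filter, Finset.mem_univ, true_and]
  calc 6 * B.card = 2 * ∑ b ∈ B, b.card := by
        rw [Finset.sum_congr rfl hblock, Finset.sum_const, smul_eq_mul]; ring
    _ = 2 * ∑ x : X, (B.filter fun b => x ∈ b).card := by rw [hswap]
    _ = ∑ x : X, 2 * (B.filter fun b => x ∈ b).card := by rw [Finset.mul_sum]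
    _ = ∑ _x : X, (v - 1) := Finset.sum_congr rfl fun x _ => sts_point_deg hv hblock hpair x
    _ = v * (v - 1) := by rw [Finset.sum_const, smul_eq_mul, Finset.card_univ, hv]

lemma card_filter_coe (B : Finset (Finset X)) (p : Finset X → Prop) [DecidablePred p] :
    (Finset.univ.filter fun a : {b // b ∈ B} => p a.1).card = (B.filter p).card := by
  apply Finset.card_bij (fun a _ => a.1)
  · intro a ha
    rw [Finset.mem_filter] at ha ⊢
    exact ⟨a.2, ha.2⟩
  · intro a _ a' _ h; exact Subtype.ext h
  · intro t ht
    rw [Finset.mem_filter] at ht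
    exact ⟨⟨t, ht.1⟩, by simp [ht.2], rfl⟩

lemma card_common (B : Finset (Finset X)) {b c : Finset X} (hb : b ∈ B) (hc : c ∈ B) :
    Fintype.card ((blockIntersectionGraph B).commonNeighbors ⟨b, hb⟩ ⟨c, hc⟩) =
      (B.filter fun a => a ≠ b ∧ a ≠ c ∧ (a ∩ b).Nonempty ∧ (a ∩ c).Nonempty).card := by
  rw [← Set.toFinset_card]
  rw [← card_filter_coe B (fun a => a ≠ b ∧ a ≠ c ∧ (a ∩ b).Nonempty ∧ (a ∩ c).Nonempty)]
  congr 1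
  ext a
  simp only [Set.mem_toFinset, SimpleGraph.mem_commonNeighbors, Finset.mem_filter,
    Finset.mem_univ, true_and]
  simp only [blockIntersectionGraph]
  constructor
  · rintro ⟨⟨h1, h2⟩, ⟨h3, h4⟩⟩
    refine ⟨fun h => h1 (Subtype.ext h.symm), fun h => h3 (Subtype.ext h.symm),
      by rwa [Finset.inter_comm], by rwa [Finset.inter_comm]⟩
  · rintro ⟨h1, h2, h3, h4⟩
    exact ⟨⟨fun h => h1 (congrArg Subtype.val h).symm, by rwa [Finset.inter_comm]⟩,
      ⟨fun h => h2 (congrArg Subtype.val h).symm, by rwa [Finset.inter_comm]⟩⟩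

lemma card_degree (B : Finset (Finset X)) {b : Finset X} (hb : b ∈ B) :
    (blockIntersectionGraph B).degree ⟨b, hb⟩ =
      (B.filter fun a => a ≠ b ∧ (a ∩ b).Nonempty).card := by
  rw [SimpleGraph.degree, SimpleGraph.neighborFinset_eq_filter]
  rw [← card_filter_coe B (fun a => a ≠ b ∧ (a ∩ b).Nonempty)]
  congr 1
  ext a
  simp only [Finset.mem_filter, Finset.mem_univ, true_and]
  simp only [blockIntersectionGraph]
  constructor
  · rintro ⟨h1, h2⟩
    exact ⟨fun h => h1 (Subtype.ext h.symm), by rwa [Finset.inter_comm]⟩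
  · rintro ⟨h1, h2⟩
    exact ⟨fun h => h1 (congrArg Subtype.val h).symm, by rwa [Finset.inter_comm]⟩

end aux2

section aux3
variable {X : Type*} [Fintype X] [DecidableEq X] {B : Finset (Finset X)}

lemma sts_degree_count {v : ℕ} (hv : Fintype.card X = v)
    (hblock : ∀ b ∈ B, b.card = 3)
    (hpair : ∀ p : Finset X, p.card = 2 → ∃! b, b ∈ B ∧ p ⊆ b)
    {b : Finset X} (hb : b ∈ B) :
    2 * (B.filter fun a => a ≠ b ∧ (a ∩ b).Nonempty).card = 3 * (v - 3) := by
  have key : (B.filter fun a => a ≠ b ∧ (a ∩ b).Nonempty)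
      = b.biUnion (fun x => (B.filter fun a => x ∈ a).erase b) := by
    ext a
    simp only [Finset.mem_filter, Finset.mem_biUnion, Finset.mem_erase]
    constructor
    · rintro ⟨haB, hab, y, hy⟩
      rw [Finset.mem_inter] at hy
      exact ⟨y, hy.2, hab, haB, hy.1⟩
    · rintro ⟨y, hyb, hab, haB, hya⟩
      exact ⟨haB, hab, y, Finset.mem_inter.mpr ⟨hya, hyb⟩⟩
  have hd : ∀ x ∈ b, ∀ y ∈ b, x ≠ y →
      Disjoint ((B.filter fun a => x ∈ a).erase b) ((B.filter fun a => y ∈ a).erase b) := by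
    intro x hx y hy hxy
    rw [Finset.disjoint_left]
    intro a hax hay
    rw [Finset.mem_erase, Finset.mem_filter] at hax hay
    exact hax.1 (sts_eq_of_two hpair hax.2.1 hb hxy hax.2.2 hay.2.2 hx hy)
  rw [key, Finset.card_biUnion hd, Finset.mul_sum]
  have hstep : ∀ x ∈ b, 2 * ((B.filter fun a => x ∈ a).erase b).card = v - 3 := by
    intro x hx
    have hbm : b ∈ B.filter fun a => x ∈ a := Finset.mem_filter.mpr ⟨hb, hx⟩
    have hr := sts_point_deg hv hblock hpair x
    have h1 : 1 ≤ (B.filter fun a => x ∈ a).card :=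
      Finset.card_pos.mpr ⟨b, hbm⟩
    rw [Finset.card_erase_of_mem hbm]
    omega
  rw [Finset.sum_congr rfl hstep, Finset.sum_const, hblock b hb, smul_eq_mul]

lemma sts_lambda_count {v : ℕ} (hv : Fintype.card X = v) (hv3 : 3 ≤ v)
    (hblock : ∀ b ∈ B, b.card = 3)
    (hpair : ∀ p : Finset X, p.card = 2 → ∃! b, b ∈ B ∧ p ⊆ b)
    {b c : Finset X} (hb : b ∈ B) (hc : c ∈ B) (hbc : b ≠ c)
    {x : X} (hxb : x ∈ b) (hxc : x ∈ c) :
    2 * (B.filter fun a => a ≠ b ∧ a ≠ c ∧ (a ∩ b).Nonempty ∧ (a ∩ c).Nonempty).card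
      = v + 3 := by
  have honly : ∀ y, y ∈ b → y ∈ c → y = x := by
    intro y hyb hyc
    by_contra h
    exact hbc (sts_eq_of_two hpair hb hc h hyb hxb hyc hxc)
  set M1 := B.filter (fun a => x ∈ a ∧ a ≠ b ∧ a ≠ c) with hM1
  set pairs := (b.erase x) ×ˢ (c.erase x) with hpairs
  set M2 := pairs.biUnion (fun pq => B.filter fun a => pq.1 ∈ a ∧ pq.2 ∈ a) with hM2
  -- membership helpers for M2
  have hM2mem : ∀ a ∈ M2, a ∈ B ∧ a ≠ b ∧ a ≠ c ∧ (a ∩ b).Nonempty ∧ (a ∩ c).Nonempty := by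
    intro a ha
    rw [hM2, Finset.mem_biUnion] at ha
    obtain ⟨pq, hpq, ha⟩ := ha
    rw [hpairs, Finset.mem_product] at hpq
    rw [Finset.mem_filter] at ha
    obtain ⟨haB, hpa, hqa⟩ := ha
    simp only [Finset.mem_erase] at hpq
    obtain ⟨⟨hpx, hpb⟩, hqx, hqc⟩ := hpq
    have hab : a ≠ b := by
      rintro rfl
      exact hqx (honly _ hqa hqc)
    have hac : a ≠ c := by
      rintro rfl
      exact hpx ((honly _ hpb hpa).symm ▸ rfl) |>.elim
    exact ⟨haB, hab, hac, ⟨_, Finset.mem_inter.mpr ⟨hpa, hpb⟩⟩,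
      ⟨_, Finset.mem_inter.mpr ⟨hqa, hqc⟩⟩⟩
  have hunion : (B.filter fun a => a ≠ b ∧ a ≠ c ∧ (a ∩ b).Nonempty ∧ (a ∩ c).Nonempty)
      = M1 ∪ M2 := by
    ext a
    rw [Finset.mem_union, Finset.mem_filter, hM1, Finset.mem_filter]
    constructor
    · rintro ⟨haB, hab, hac, ⟨p, hp⟩, ⟨q, hq⟩⟩
      rw [Finset.mem_inter] at hp hq
      by_cases hxa : x ∈ a
      · exact Or.inl ⟨haB, hxa, hab, hac⟩
      · refine Or.inr ?_
        rw [hM2, Finset.mem_biUnion]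
        refine ⟨(p, q), ?_, Finset.mem_filter.mpr ⟨haB, hp.1, hq.1⟩⟩
        rw [hpairs, Finset.mem_product, Finset.mem_erase, Finset.mem_erase]
        exact ⟨⟨fun h => hxa (h ▸ hp.1), hp.2⟩, fun h => hxa (h ▸ hq.1), hq.2⟩
    · rintro (⟨haB, hxa, hab, hac⟩ | hm2)
      · exact ⟨haB, hab, hac, ⟨x, Finset.mem_inter.mpr ⟨hxa, hxb⟩⟩,
          ⟨x, Finset.mem_inter.mpr ⟨hxa, hxc⟩⟩⟩
      · exact hM2mem a hm2
  have hdisjM : Disjoint M1 M2 := by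
    rw [Finset.disjoint_left]
    intro a ha1 ha2
    rw [hM1, Finset.mem_filter] at ha1
    obtain ⟨haB, hxa, hab, hac⟩ := ha1
    rw [hM2, Finset.mem_biUnion] at ha2
    obtain ⟨pq, hpq, ha⟩ := ha2
    rw [hpairs, Finset.mem_product, Finset.mem_erase, Finset.mem_erase] at hpq
    rw [Finset.mem_filter] at ha
    exact hab (sts_eq_of_two hpair haB hb (Ne.symm hpq.1.1) hxa ha.2.1 hxb hpq.1.2)
  have hM2card : M2.card = 4 := by
    have hd : ∀ pq ∈ pairs, ∀ pq' ∈ pairs, pq ≠ pq' →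
        Disjoint (B.filter fun a => pq.1 ∈ a ∧ pq.2 ∈ a)
          (B.filter fun a => pq'.1 ∈ a ∧ pq'.2 ∈ a) := by
      intro pq hpq pq' hpq' hne
      rw [Finset.disjoint_left]
      intro a ha ha'
      rw [hpairs, Finset.mem_product, Finset.mem_erase, Finset.mem_erase] at hpq hpq'
      rw [Finset.mem_filter] at ha ha'
      have hab : a ≠ b := by
        rintro rfl
        exact hpq.2.1 (honly _ ha.2.2 hpq.2.2)
      have hac : a ≠ c := by
        rintro rfl
        exact hpq.1.1 (honly _ hpq.1.2 ha.2.1)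
      have h1 : pq.1 = pq'.1 := by
        by_contra h
        exact hab (sts_eq_of_two hpair ha.1 hb h ha.2.1 ha'.2.1 hpq.1.2 hpq'.1.2)
      have h2 : pq.2 = pq'.2 := by
        by_contra h
        exact hac (sts_eq_of_two hpair ha.1 hc h ha.2.2 ha'.2.2 hpq.2.2 hpq'.2.2)
      exact hne (Prod.ext h1 h2)
    rw [hM2, Finset.card_biUnion hd]
    have hone : ∀ pq ∈ pairs, (B.filter fun a => pq.1 ∈ a ∧ pq.2 ∈ a).card = 1 := by
      intro pq hpq
      rw [hpairs, Finset.mem_product, Finset.mem_erase, Finset.mem_erase] at hpq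
      have hne : pq.1 ≠ pq.2 := by
        intro h
        exact hpq.1.1 (honly _ hpq.1.2 (h ▸ hpq.2.2))
      obtain ⟨a, -, -, -, hfil⟩ := sts_filter_pair hpair hne
      rw [hfil, Finset.card_singleton]
    rw [Finset.sum_congr rfl hone, Finset.sum_const, smul_eq_mul, mul_one]
    rw [hpairs, Finset.card_product, Finset.card_erase_of_mem hxb,
      Finset.card_erase_of_mem hxc, hblock b hb, hblock c hc]
  have hM1card : M1.card = (B.filter fun a => x ∈ a).card - 2 := by
    have hsub : ({b, c} : Finset (Finset X)) ⊆ B.filter fun a => x ∈ a := by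
      intro t ht
      rw [Finset.mem_insert, Finset.mem_singleton] at ht
      rcases ht with rfl | rfl
      · exact Finset.mem_filter.mpr ⟨hb, hxb⟩
      · exact Finset.mem_filter.mpr ⟨hc, hxc⟩
    have : M1 = (B.filter fun a => x ∈ a) \ {b, c} := by
      ext a
      rw [hM1, Finset.mem_filter, Finset.mem_sdiff, Finset.mem_filter, Finset.mem_insert,
        Finset.mem_singleton]
      tauto
    rw [this, Finset.card_sdiff_of_subset hsub, Finset.card_pair hbc]
  have hr := sts_point_deg hv hblock hpair x
  have hr2 : 2 ≤ (B.filter fun a => x ∈ a).card := by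
    have hsub : ({b, c} : Finset (Finset X)) ⊆ B.filter fun a => x ∈ a := by
      intro t ht
      rw [Finset.mem_insert, Finset.mem_singleton] at ht
      rcases ht with rfl | rfl
      · exact Finset.mem_filter.mpr ⟨hb, hxb⟩
      · exact Finset.mem_filter.mpr ⟨hc, hxc⟩
    calc 2 = ({b, c} : Finset (Finset X)).card := (Finset.card_pair hbc).symm
      _ ≤ _ := Finset.card_le_card hsub
  rw [hunion, Finset.card_union_of_disjoint hdisjM, hM1card, hM2card]
  omega

lemma sts_mu_count
    (hpair : ∀ p : Finset X, p.card = 2 → ∃! b, b ∈ B ∧ p ⊆ b)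
    (hblock : ∀ b ∈ B, b.card = 3)
    {b c : Finset X} (hb : b ∈ B) (hc : c ∈ B) (hbc : b ≠ c)
    (hdisj : ∀ y, y ∈ b → y ∉ c) :
    (B.filter fun a => a ≠ b ∧ a ≠ c ∧ (a ∩ b).Nonempty ∧ (a ∩ c).Nonempty).card = 9 := by
  have key : (B.filter fun a => a ≠ b ∧ a ≠ c ∧ (a ∩ b).Nonempty ∧ (a ∩ c).Nonempty)
      = (b ×ˢ c).biUnion (fun pq => B.filter fun a => pq.1 ∈ a ∧ pq.2 ∈ a) := by
    ext a
    rw [Finset.mem_filter, Finset.mem_biUnion]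
    constructor
    · rintro ⟨haB, hab, hac, ⟨p, hp⟩, ⟨q, hq⟩⟩
      rw [Finset.mem_inter] at hp hq
      exact ⟨(p, q), Finset.mem_product.mpr ⟨hp.2, hq.2⟩,
        Finset.mem_filter.mpr ⟨haB, hp.1, hq.1⟩⟩
    · rintro ⟨pq, hpq, ha⟩
      rw [Finset.mem_product] at hpq
      rw [Finset.mem_filter] at ha
      obtain ⟨haB, hpa, hqa⟩ := ha
      have hab : a ≠ b := by
        rintro rfl
        exact hdisj _ hqa hpq.2
      have hac : a ≠ c := by
        rintro rfl
        exact hdisj _ hpq.1 hpa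
      exact ⟨haB, hab, hac, ⟨_, Finset.mem_inter.mpr ⟨hpa, hpq.1⟩⟩,
        ⟨_, Finset.mem_inter.mpr ⟨hqa, hpq.2⟩⟩⟩
  have hd : ∀ pq ∈ b ×ˢ c, ∀ pq' ∈ b ×ˢ c, pq ≠ pq' →
      Disjoint (B.filter fun a => pq.1 ∈ a ∧ pq.2 ∈ a)
        (B.filter fun a => pq'.1 ∈ a ∧ pq'.2 ∈ a) := by
    intro pq hpq pq' hpq' hne
    rw [Finset.disjoint_left]
    intro a ha ha'
    rw [Finset.mem_product] at hpq hpq'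
    rw [Finset.mem_filter] at ha ha'
    have hab : a ≠ b := by
      rintro rfl
      exact hdisj _ ha.2.2 hpq.2
    have hac : a ≠ c := by
      rintro rfl
      exact hdisj _ hpq.1 ha.2.1
    have h1 : pq.1 = pq'.1 := by
      by_contra h
      exact hab (sts_eq_of_two hpair ha.1 hb h ha.2.1 ha'.2.1 hpq.1 hpq'.1)
    have h2 : pq.2 = pq'.2 := by
      by_contra h
      exact hac (sts_eq_of_two hpair ha.1 hc h ha.2.2 ha'.2.2 hpq.2 hpq'.2)
    exact hne (Prod.ext h1 h2)
  rw [key, Finset.card_biUnion hd]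
  have hone : ∀ pq ∈ b ×ˢ c, (B.filter fun a => pq.1 ∈ a ∧ pq.2 ∈ a).card = 1 := by
    intro pq hpq
    rw [Finset.mem_product] at hpq
    have hne : pq.1 ≠ pq.2 := by
      intro h
      exact hdisj _ hpq.1 (h ▸ hpq.2)
    obtain ⟨a, -, -, -, hfil⟩ := sts_filter_pair hpair hne
    rw [hfil, Finset.card_singleton]
  rw [Finset.sum_congr rfl hone, Finset.sum_const, smul_eq_mul, mul_one,
    Finset.card_product, hblock b hb, hblock c hc]

end aux3


/-- Let `(X, B)` be a Steiner triple system on `v` points with `3 ≤ v`, and let `G` be its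
block-intersection graph.  Then `6·|B| = v·(v-1)`, and for all naturals `d, l` with
`2d = 3(v-3)` and `2l = v + 3`, the graph `G` is strongly regular with parameters
`(|B|, d, l, 9)`. -/
theorem blockIntersectionGraph_steinerTripleSystem_isSRGWith
    (X : Type*) [Fintype X] [DecidableEq X] (v : ℕ) (hv : Fintype.card X = v) (hv3 : 3 ≤ v)
    (B : Finset (Finset X))
    (hblock : ∀ b ∈ B, b.card = 3)
    (hpair : ∀ p : Finset X, p.card = 2 → ∃! b, b ∈ B ∧ p ⊆ b) :
    6 * B.card = v * (v - 1) ∧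
    ∀ d l : ℕ, 2 * d = 3 * (v - 3) → 2 * l = v + 3 →
      (blockIntersectionGraph B).IsSRGWith B.card d l 9 := by
  refine ⟨sts_block_count hv hblock hpair, ?_⟩
  intro d l hd hl
  refine ⟨Fintype.card_coe B, ?_, ?_, ?_⟩
  · rintro ⟨b, hb⟩
    have h := sts_degree_count hv hblock hpair hb
    rw [card_degree B hb]
    omega
  · rintro ⟨b, hb⟩ ⟨c, hc⟩ ⟨hne, hint⟩
    rw [card_common B hb hc]
    have hbc : b ≠ c := fun h => hne (Subtype.ext h)
    obtain ⟨x, hx⟩ := hint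
    rw [Finset.mem_inter] at hx
    have h := sts_lambda_count hv hv3 hblock hpair hb hc hbc hx.1 hx.2
    omega
  · rintro ⟨b, hb⟩ ⟨c, hc⟩ hne hnadj
    rw [card_common B hb hc]
    have hbc : b ≠ c := fun h => hne (Subtype.ext h)
    have hint : ¬((b : Finset X) ∩ c).Nonempty := fun h => hnadj ⟨hne, h⟩
    have hdisj2 : ∀ y, y ∈ b → y ∉ c := fun y hyb hyc =>
      hint ⟨y, Finset.mem_inter.mpr ⟨hyb, hyc⟩⟩
    exact sts_mu_count hpair hblock hb hc hbc hdisj2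
end

section
/- Let (P, L₁, …, L_k) be a net of order n and degree k with 2 ≤ n. Then the net graph of the net is strongly regular with parameters (n^2, k(n-1), (n-2)+(k-1)(k-2), k(k-1)). -/
/-- Two points of a net with parallel classes `L` are collinear if some line
(a member of some parallel class) contains both. -/
def NetCollinear {P : Type*} {k : ℕ} (L : Fin k → Finset (Finset P)) (p q : P) : Prop :=
  ∃ i : Fin k, ∃ m ∈ L i, p ∈ m ∧ q ∈ m

/-- The net graph: two distinct points are adjacent iff they are collinear. -/
def netGraph {P : Type*} {k : ℕ} (L : Fin k → Finset (Finset P)) : SimpleGraph P where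
  Adj p q := p ≠ q ∧ NetCollinear L p q
  symm := ⟨by
    rintro p q ⟨hne, i, m, hm, hp, hq⟩
    exact ⟨hne.symm, i, m, hm, hq, hp⟩⟩
  loopless := ⟨fun p h => h.1 rfl⟩

instance netGraph.instDecidableRelAdj {P : Type*} [DecidableEq P] {k : ℕ}
    (L : Fin k → Finset (Finset P)) : DecidableRel (netGraph L).Adj := fun p q =>
  inferInstanceAs (Decidable (p ≠ q ∧ ∃ i : Fin k, ∃ m ∈ L i, p ∈ m ∧ q ∈ m))

/-- Let `(P, L₁, …, L_k)` be a net of order `n` and degree `k` with `2 ≤ n`.  Then the net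
graph is strongly regular with parameters `(n², k(n-1), (n-2)+(k-1)(k-2), k(k-1))`. -/
theorem netGraph_isSRGWith (P : Type*) [Fintype P] [DecidableEq P] (n k : ℕ) (hn : 2 ≤ n)
    (L : Fin k → Finset (Finset P))
    (hcardP : Fintype.card P = n ^ 2)
    (hline : ∀ i : Fin k, ∀ m ∈ L i, m.card = n)
    (hpart : ∀ i : Fin k, ∀ p : P, ∃! m, m ∈ L i ∧ p ∈ m)
    (hinter : ∀ i j : Fin k, i ≠ j → ∀ ℓ ∈ L i, ∀ m ∈ L j, ∃! p : P, p ∈ ℓ ∧ p ∈ m) :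
    (netGraph L).IsSRGWith (n ^ 2) (k * (n - 1)) ((n - 2) + (k - 1) * (k - 2)) (k * (k - 1)) := by
  classical
  choose ln hlnL hlnmem using fun (i : Fin k) (p : P) => (hpart i p).exists
  have huniq : ∀ (i : Fin k) (p : P) (m : Finset P), m ∈ L i → p ∈ m → m = ln i p :=
    fun i p m hm hp => (hpart i p).unique ⟨hm, hp⟩ ⟨hlnL i p, hlnmem i p⟩
  have htwo : ∀ (i j : Fin k), i ≠ j → ∀ (a b : P) (ℓ m : Finset P), ℓ ∈ L i → m ∈ L j →
      a ∈ ℓ → a ∈ m → b ∈ ℓ → b ∈ m → a = b := fun i j hij a b ℓ m hℓ hm h1 h2 h3 h4 =>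
    (hinter i j hij ℓ hℓ m hm).unique ⟨h1, h2⟩ ⟨h3, h4⟩
  have hclass : ∀ (p q : P) (i j : Fin k), p ≠ q → q ∈ ln i p → q ∈ ln j p → i = j := by
    intro p q i j hpq hqi hqj
    by_contra hij
    exact hpq (htwo i j hij p q (ln i p) (ln j p) (hlnL i p) (hlnL j p)
      (hlnmem i p) (hlnmem j p) hqi hqj)
  have hlneq : ∀ (i : Fin k) (p q : P), q ∈ ln i p → ln i p = ln i q :=
    fun i p q hq => huniq i q (ln i p) (hlnL i p) hq
  have hadj : ∀ p q : P, (netGraph L).Adj p q ↔ p ≠ q ∧ ∃ i, q ∈ ln i p := by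
    intro p q
    constructor
    · rintro ⟨hne, i, m, hm, hp, hq⟩
      exact ⟨hne, i, (huniq i p m hm hp) ▸ hq⟩
    · rintro ⟨hne, i, hq⟩
      exact ⟨hne, i, ln i p, hlnL i p, hlnmem i p, hq⟩
  choose pt hpt1 hpt2 using fun (j j' : Fin k) (h : j ≠ j') (a b : P) =>
    (hinter j j' h (ln j a) (hlnL j a) (ln j' b) (hlnL j' b)).exists
  have hptu : ∀ (j j' : Fin k) (h : j ≠ j') (a b r : P), r ∈ ln j a → r ∈ ln j' b →
      r = pt j j' h a b := fun j j' h a b r h1 h2 =>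
    htwo j j' h r (pt j j' h a b) (ln j a) (ln j' b) (hlnL j a) (hlnL j' b)
      h1 h2 (hpt1 j j' h a b) (hpt2 j j' h a b)
  have harith : ∀ a : ℕ, a * (a - 1) = a * a - a := fun a => Nat.mul_pred ..
  have hnb : ∀ p : P, (netGraph L).neighborFinset p =
      Finset.univ.biUnion (fun i : Fin k => (ln i p).erase p) := by
    intro p; ext q
    simp only [SimpleGraph.mem_neighborFinset, Finset.mem_biUnion, Finset.mem_univ,
      Finset.mem_erase, true_and]
    rw [hadj]
    constructor
    · rintro ⟨hne, i, hq⟩; exact ⟨i, Ne.symm hne, hq⟩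
    · rintro ⟨i, hne, hq⟩; exact ⟨Ne.symm hne, i, hq⟩
  have hdeg : ∀ p : P, ((netGraph L).neighborFinset p).card = k * (n - 1) := by
    intro p
    rw [hnb p, Finset.card_biUnion]
    · rw [Finset.sum_congr rfl (fun i _ =>
        by rw [Finset.card_erase_of_mem (hlnmem i p), hline i _ (hlnL i p)]),
        Finset.sum_const, Finset.card_univ, Fintype.card_fin, smul_eq_mul]
    · intro i _ j _ hij
      simp only [Finset.disjoint_left, Finset.mem_erase]
      rintro a ⟨hap, hai⟩ ⟨_, haj⟩
      exact hap (htwo i j hij a p (ln i p) (ln j p) (hlnL i p) (hlnL j p)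
        hai haj (hlnmem i p) (hlnmem j p))
  have hcn : ∀ p q : P, Fintype.card ((netGraph L).commonNeighbors p q) =
      ((netGraph L).neighborFinset p ∩ (netGraph L).neighborFinset q).card := by
    intro p q
    rw [← Set.toFinset_card]
    congr 1
    ext r
    exact Set.mem_toFinset.trans (by simp [SimpleGraph.commonNeighbors])
  constructor
  · exact hcardP
  · intro v; exact hdeg v
  · -- adjacent case
    intro p q hpq
    obtain ⟨hne, i0, hq⟩ := (hadj p q).1 hpq
    rw [hcn]
    set N := (netGraph L).neighborFinset p ∩ (netGraph L).neighborFinset q with hN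
    set A : Finset P := ((ln i0 p).erase p).erase q with hA
    have hmemN : ∀ r : P, r ∈ N ↔ (netGraph L).Adj p r ∧ (netGraph L).Adj q r := by
      intro r; simp [hN]
    have hAsub : A ⊆ N := by
      intro r hr
      simp only [hA, Finset.mem_erase] at hr
      obtain ⟨hrq, hrp, hrl⟩ := hr
      rw [hmemN]
      refine ⟨(hadj p r).2 ⟨Ne.symm hrp, i0, hrl⟩, (hadj q r).2 ⟨Ne.symm hrq, i0, ?_⟩⟩
      rw [← hlneq i0 p q hq]; exact hrl
    have hcardA : A.card = n - 2 := by
      have hqmem : q ∈ (ln i0 p).erase p := Finset.mem_erase.2 ⟨Ne.symm hne, hq⟩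
      rw [hA, Finset.card_erase_of_mem hqmem, Finset.card_erase_of_mem (hlnmem i0 p),
        hline i0 _ (hlnL i0 p)]
      omega
    set T : Finset (Fin k × Fin k) :=
      Finset.univ.filter (fun jj => jj.1 ≠ i0 ∧ jj.2 ≠ i0 ∧ jj.1 ≠ jj.2) with hT
    have hcardT : T.card = (k - 1) * (k - 2) := by
      set S : Finset (Fin k × Fin k) :=
        (Finset.univ.erase i0) ×ˢ (Finset.univ.erase i0) with hS
      have h1 : T = S.filter (fun jj => ¬ jj.1 = jj.2) := by
        ext jj
        simp only [hT, hS, Finset.mem_filter, Finset.mem_univ, true_and,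
          Finset.mem_product, Finset.mem_erase, and_assoc]
      have h2 : S.filter (fun jj => jj.1 = jj.2) =
          (Finset.univ.erase i0).image (fun j => (j, j)) := by
        ext ⟨x, y⟩
        simp only [hS, Finset.mem_filter, Finset.mem_product, Finset.mem_image,
          Finset.mem_erase, Finset.mem_univ, and_true, true_and, Prod.mk.injEq]
        constructor
        · rintro ⟨⟨hx, hy⟩, h⟩
          exact ⟨x, hx, rfl, h⟩
        · rintro ⟨j, hj, rfl, rfl⟩
          exact ⟨⟨hj, hj⟩, rfl⟩
      have h3 := Finset.card_filter_add_card_filter_not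
        (s := S) (p := fun jj => jj.1 = jj.2)
      have h4 : S.card = (k - 1) * (k - 1) := by
        rw [hS, Finset.card_product, Finset.card_erase_of_mem (Finset.mem_univ i0),
          Finset.card_univ, Fintype.card_fin]
      have h5 : ((Finset.univ.erase i0).image (fun j : Fin k => (j, j))).card = k - 1 := by
        rw [Finset.card_image_of_injective _ (fun a b hab => (Prod.ext_iff.1 hab).1),
          Finset.card_erase_of_mem (Finset.mem_univ i0), Finset.card_univ, Fintype.card_fin]
      rw [h1]
      rw [h2, h5] at h3
      have e1 : (S.filter (fun jj => ¬ jj.1 = jj.2)).card = S.card - (k - 1) := by omega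
      rw [e1, h4, show k - 2 = (k - 1) - 1 from by omega, harith (k - 1)]
    have hcard2 : (N \ A).card = (k - 1) * (k - 2) := by
      rw [← hcardT]
      refine (Finset.card_bij
        (fun jj hjj => pt jj.1 jj.2 (by exact (Finset.mem_filter.mp hjj).2.2.2) p q) ?_ ?_ ?_).symm
      · -- maps into N \ A
        rintro ⟨j, j'⟩ hjj
        obtain ⟨-, hji0, hj'i0, hjj'⟩ := Finset.mem_filter.mp hjj
        show pt j j' hjj' p q ∈ N \ A
        generalize hr : pt j j' hjj' p q = r
        have hr1 : r ∈ ln j p := hr ▸ hpt1 j j' hjj' p q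
        have hr2 : r ∈ ln j' q := hr ▸ hpt2 j j' hjj' p q
        have hrp : r ≠ p := by
          rintro rfl
          exact hne (htwo j' i0 hj'i0 r q (ln j' q) (ln i0 r) (hlnL j' q) (hlnL i0 r)
            hr2 (hlnmem i0 r) (hlnmem j' q) hq)
        have hrq : r ≠ q := by
          rintro rfl
          exact hne (htwo j i0 hji0 p r (ln j p) (ln i0 p) (hlnL j p) (hlnL i0 p)
            (hlnmem j p) (hlnmem i0 p) hr1 hq)
        rw [Finset.mem_sdiff, hmemN]
        refine ⟨⟨(hadj p r).2 ⟨Ne.symm hrp, j, hr1⟩, (hadj q r).2 ⟨Ne.symm hrq, j', hr2⟩⟩, ?_⟩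
        intro hrA
        simp only [hA, Finset.mem_erase] at hrA
        exact hji0 (hclass p r j i0 (Ne.symm hrp) hr1 hrA.2.2)
      · -- injective
        rintro ⟨j, j'⟩ hjj ⟨l, l'⟩ hll heq
        obtain ⟨-, hji0, hj'i0, hjj'⟩ := Finset.mem_filter.mp hjj
        obtain ⟨-, hli0, hl'i0, hll'⟩ := Finset.mem_filter.mp hll
        have heq' : pt j j' hjj' p q = pt l l' hll' p q := heq
        have hr1 : pt j j' hjj' p q ∈ ln j p := hpt1 j j' hjj' p q
        have hr2 : pt j j' hjj' p q ∈ ln j' q := hpt2 j j' hjj' p q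
        have hr1' : pt j j' hjj' p q ∈ ln l p := heq' ▸ hpt1 l l' hll' p q
        have hr2' : pt j j' hjj' p q ∈ ln l' q := heq' ▸ hpt2 l l' hll' p q
        have hrp : pt j j' hjj' p q ≠ p := by
          intro hrfl
          refine hne (htwo j' i0 hj'i0 p q (ln j' q) (ln i0 p) (hlnL j' q) (hlnL i0 p)
            (hrfl ▸ hr2) (hlnmem i0 p) (hlnmem j' q) hq)
        have hrq : pt j j' hjj' p q ≠ q := by
          intro hrfl
          refine hne (htwo j i0 hji0 p q (ln j p) (ln i0 p) (hlnL j p) (hlnL i0 p)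
            (hlnmem j p) (hlnmem i0 p) (hrfl ▸ hr1) hq)
        have e1 : j = l := hclass p _ j l (Ne.symm hrp) hr1 hr1'
        have e2 : j' = l' := hclass q _ j' l' (Ne.symm hrq) hr2 hr2'
        simp [e1, e2]
      · -- surjective
        intro r hrNA
        rw [Finset.mem_sdiff, hmemN] at hrNA
        obtain ⟨⟨hpr, hqr⟩, hrA⟩ := hrNA
        obtain ⟨hpr', j, hrj⟩ := (hadj p r).1 hpr
        obtain ⟨hqr', j', hrj'⟩ := (hadj q r).1 hqr
        have hrq : r ≠ q := Ne.symm hqr'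
        have hrp : r ≠ p := Ne.symm hpr'
        have hji0 : j ≠ i0 := by
          rintro rfl
          exact hrA (Finset.mem_erase.2 ⟨hrq, Finset.mem_erase.2 ⟨hrp, hrj⟩⟩)
        have hj'i0 : j' ≠ i0 := by
          rintro rfl
          apply hrA
          refine Finset.mem_erase.2 ⟨hrq, Finset.mem_erase.2 ⟨hrp, ?_⟩⟩
          rw [hlneq j' p q hq]; exact hrj'
        have hjj' : j ≠ j' := by
          rintro rfl
          have e1 : ln j p = ln j r := huniq j r (ln j p) (hlnL j p) hrj
          have e2 : ln j q = ln j r := huniq j r (ln j q) (hlnL j q) hrj'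
          have hqp : q ∈ ln j p := by rw [e1, ← e2]; exact hlnmem j q
          exact hji0 (hclass p q j i0 hne hqp hq)
        refine ⟨(j, j'), Finset.mem_filter.2 ⟨Finset.mem_univ _, hji0, hj'i0, hjj'⟩, ?_⟩
        exact (hptu j j' hjj' p q r hrj hrj').symm
    rw [← Finset.card_sdiff_add_card_eq_card hAsub, hcard2, hcardA]
    omega
  · -- non-adjacent case
    intro p q hne hnadj
    rw [hcn]
    set N := (netGraph L).neighborFinset p ∩ (netGraph L).neighborFinset q with hN
    have hmemN : ∀ r : P, r ∈ N ↔ (netGraph L).Adj p r ∧ (netGraph L).Adj q r := by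
      intro r; simp [hN]
    have hnocol : ∀ i : Fin k, q ∉ ln i p := by
      intro i hq
      exact hnadj ((hadj p q).2 ⟨hne, i, hq⟩)
    set T : Finset (Fin k × Fin k) := Finset.univ.filter (fun jj => jj.1 ≠ jj.2) with hT
    have hcardT : T.card = k * (k - 1) := by
      have h2 : Finset.univ.filter (fun jj : Fin k × Fin k => jj.1 = jj.2) =
          Finset.univ.image (fun j : Fin k => (j, j)) := by
        ext ⟨x, y⟩
        simp only [Finset.mem_filter, Finset.mem_univ, true_and, Finset.mem_image,
          Prod.mk.injEq]
        constructor
        · intro h; exact ⟨x, rfl, h⟩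
        · rintro ⟨j, rfl, rfl⟩; rfl
      have h3 := Finset.card_filter_add_card_filter_not
        (s := (Finset.univ : Finset (Fin k × Fin k))) (p := fun jj => jj.1 = jj.2)
      have h4 : (Finset.univ : Finset (Fin k × Fin k)).card = k * k := by
        rw [Finset.card_univ, Fintype.card_prod, Fintype.card_fin]
      have h5 : (Finset.univ.image (fun j : Fin k => (j, j))).card = k := by
        rw [Finset.card_image_of_injective _ (fun a b hab => (Prod.ext_iff.1 hab).1),
          Finset.card_univ, Fintype.card_fin]
      have hTeq : T = Finset.univ.filter (fun jj : Fin k × Fin k => ¬ jj.1 = jj.2) := rfl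
      rw [h2, h5] at h3
      have e1 : (Finset.univ.filter
          (fun jj : Fin k × Fin k => ¬ jj.1 = jj.2)).card = (Finset.univ : Finset (Fin k × Fin k)).card - k := by omega
      rw [hTeq, e1, h4, harith k]
    rw [← hcardT]
    refine (Finset.card_bij
      (fun jj hjj => pt jj.1 jj.2 (by exact (Finset.mem_filter.mp hjj).2) p q) ?_ ?_ ?_).symm
    · rintro ⟨j, j'⟩ hjj
      have hjj' : j ≠ j' := (Finset.mem_filter.mp hjj).2
      show pt j j' hjj' p q ∈ N
      generalize hr : pt j j' hjj' p q = r
      have hr1 : r ∈ ln j p := hr ▸ hpt1 j j' hjj' p q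
      have hr2 : r ∈ ln j' q := hr ▸ hpt2 j j' hjj' p q
      have hrp : r ≠ p := by
        rintro rfl
        exact hnadj ((hadj q r).2 ⟨Ne.symm hne, j', hr2⟩).symm
      have hrq : r ≠ q := by
        rintro rfl
        exact hnadj ((hadj p r).2 ⟨hne, j, hr1⟩)
      rw [hmemN]
      exact ⟨(hadj p r).2 ⟨Ne.symm hrp, j, hr1⟩, (hadj q r).2 ⟨Ne.symm hrq, j', hr2⟩⟩
    · rintro ⟨j, j'⟩ hjj ⟨l, l'⟩ hll heq
      have hjj' : j ≠ j' := (Finset.mem_filter.mp hjj).2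
      have hll' : l ≠ l' := (Finset.mem_filter.mp hll).2
      have heq' : pt j j' hjj' p q = pt l l' hll' p q := heq
      have hr1 : pt j j' hjj' p q ∈ ln j p := hpt1 j j' hjj' p q
      have hr2 : pt j j' hjj' p q ∈ ln j' q := hpt2 j j' hjj' p q
      have hr1' : pt j j' hjj' p q ∈ ln l p := heq' ▸ hpt1 l l' hll' p q
      have hr2' : pt j j' hjj' p q ∈ ln l' q := heq' ▸ hpt2 l l' hll' p q
      have hrp : pt j j' hjj' p q ≠ p := by
        intro hrfl
        exact hnadj ((hadj q p).2 ⟨Ne.symm hne, j', hrfl ▸ hr2⟩).symm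
      have hrq : pt j j' hjj' p q ≠ q := by
        intro hrfl
        exact hnadj ((hadj p q).2 ⟨hne, j, hrfl ▸ hr1⟩)
      have e1 : j = l := hclass p _ j l (Ne.symm hrp) hr1 hr1'
      have e2 : j' = l' := hclass q _ j' l' (Ne.symm hrq) hr2 hr2'
      simp [e1, e2]
    · intro r hrN
      rw [hmemN] at hrN
      obtain ⟨hpr, hqr⟩ := hrN
      obtain ⟨hpr', j, hrj⟩ := (hadj p r).1 hpr
      obtain ⟨hqr', j', hrj'⟩ := (hadj q r).1 hqr
      have hjj' : j ≠ j' := by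
        rintro rfl
        have e1 : ln j p = ln j r := huniq j r (ln j p) (hlnL j p) hrj
        have e2 : ln j q = ln j r := huniq j r (ln j q) (hlnL j q) hrj'
        have : q ∈ ln j p := by rw [e1, ← e2]; exact hlnmem j q
        exact hnocol j this
      exact ⟨(j, j'), Finset.mem_filter.2 ⟨Finset.mem_univ _, hjj'⟩,
        (hptu j j' hjj' p q r hrj hrj').symm⟩
end

section
/- Let G be a finite simple graph with vertex set V and let S ⊆ V be a distinguishing set, i.e., for all distinct u, v ∈ V with u ∉ S and v ∉ S, one has N(u) ∩ S ≠ N(v) ∩ S. Define colorings by χ₀(v) = Sum.inl v if v ∈ S and χ₀(v) = Sum.inr (deg v) if v ∉ S, and for each r, χ_{r+1}(v) = (χ_r(v), { χ_r(w) : w ∈ N(v) }). Then χ₂ is injective; that is, after individualizing the vertices of S, two rounds of count-free Color Refinement assign every vertex of G a unique color. -/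
/-- Round 0 of count-free Color Refinement after individualizing `S`: each vertex of `S`
gets its own unique color, and each vertex outside `S` is colored by its degree. -/
def cfcrChi0 {V : Type*} [Fintype V] [DecidableEq V] (G : SimpleGraph V)
    [DecidableRel G.Adj] (S : Finset V) : V → V ⊕ ℕ :=
  fun v => if v ∈ S then Sum.inl v else Sum.inr (G.degree v)

/-- Round 1 of count-free Color Refinement: the new color of `v` is the pair of its old color
and the *set* of old colors of its neighbors. -/
def cfcrChi1 {V : Type*} [Fintype V] [DecidableEq V] (G : SimpleGraph V)
    [DecidableRel G.Adj] (S : Finset V) : V → (V ⊕ ℕ) × Set (V ⊕ ℕ) :=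
  fun v => (cfcrChi0 G S v, cfcrChi0 G S '' G.neighborSet v)

/-- Round 2 of count-free Color Refinement. -/
def cfcrChi2 {V : Type*} [Fintype V] [DecidableEq V] (G : SimpleGraph V)
    [DecidableRel G.Adj] (S : Finset V) :
    V → ((V ⊕ ℕ) × Set (V ⊕ ℕ)) × Set ((V ⊕ ℕ) × Set (V ⊕ ℕ)) :=
  fun v => (cfcrChi1 G S v, cfcrChi1 G S '' G.neighborSet v)

/-! Since the vertices of `S` are individualized, the set of round-0 colors of the neighbors of a
vertex determines its neighbors in `S`. So round 1 already separates two vertices outside `S`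
(by the distinguishing property), while vertices of `S` are separated by their own colors;
round 2 refines round 1. -/

section CountFreeColorRefinement

variable {V : Type*} [Fintype V] [DecidableEq V] (G : SimpleGraph V) [DecidableRel G.Adj]
  (S : Finset V)

theorem cfcrChi0_eq_inl_iff {v x : V} : cfcrChi0 G S v = Sum.inl x ↔ v = x ∧ x ∈ S := by
  unfold cfcrChi0
  split_ifs with hv
  · rw [Sum.inl.injEq]
    exact ⟨fun hvx => ⟨hvx, hvx ▸ hv⟩, And.left⟩
  · exact ⟨False.elim, fun ⟨hvx, hx⟩ => hv (hvx ▸ hx)⟩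

theorem cfcrChi0_of_mem {v : V} (hv : v ∈ S) : cfcrChi0 G S v = Sum.inl v :=
  (cfcrChi0_eq_inl_iff G S).2 ⟨rfl, hv⟩

theorem inl_mem_cfcrChi0_image_iff {A : Set V} {x : V} :
    Sum.inl x ∈ cfcrChi0 G S '' A ↔ x ∈ A ∩ (S : Set V) := by
  simp only [Set.mem_image, cfcrChi0_eq_inl_iff]
  constructor
  · rintro ⟨v, hvA, rfl, hvS⟩
    exact ⟨hvA, hvS⟩
  · rintro ⟨hxA, hxS⟩
    exact ⟨x, hxA, rfl, hxS⟩

theorem inter_eq_of_cfcrChi0_image_eq {A B : Set V} (h : cfcrChi0 G S '' A = cfcrChi0 G S '' B) :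
    A ∩ (S : Set V) = B ∩ (S : Set V) := by
  ext x
  rw [← inl_mem_cfcrChi0_image_iff G S, h, inl_mem_cfcrChi0_image_iff G S]

theorem eq_of_cfcrChi0_eq_of_mem {u v : V} (hu : u ∈ S) (h : cfcrChi0 G S u = cfcrChi0 G S v) :
    u = v := by
  rw [cfcrChi0_of_mem G S hu, eq_comm, cfcrChi0_eq_inl_iff] at h
  exact h.1.symm

theorem cfcrChi1_injective
    (hS : ∀ u v : V, u ≠ v → u ∉ S → v ∉ S →
      (G.neighborSet u ∩ (S : Set V)) ≠ (G.neighborSet v ∩ (S : Set V))) :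
    Function.Injective (cfcrChi1 G S) := by
  intro u v h
  obtain ⟨hcolor, hnbhd⟩ := Prod.ext_iff.1 h
  by_cases hu : u ∈ S
  · exact eq_of_cfcrChi0_eq_of_mem G S hu hcolor
  by_cases hv : v ∈ S
  · exact (eq_of_cfcrChi0_eq_of_mem G S hv hcolor.symm).symm
  by_contra hne
  exact hS u v hne hu hv (inter_eq_of_cfcrChi0_image_eq G S hnbhd)

end CountFreeColorRefinement

/-- Let `G` be a finite simple graph and `S` a distinguishing set: for all distinct vertices
`u, v ∉ S` we have `N(u) ∩ S ≠ N(v) ∩ S`.  Then after individualizing the vertices of `S`,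
two rounds of count-free Color Refinement assign every vertex of `G` a unique color, i.e.,
`χ₂` is injective. -/
theorem distinguishingSet_countFree_colorRefinement_injective
    (V : Type*) [Fintype V] [DecidableEq V] (G : SimpleGraph V) [DecidableRel G.Adj]
    (S : Finset V)
    (hS : ∀ u v : V, u ≠ v → u ∉ S → v ∉ S →
      (G.neighborSet u ∩ (S : Set V)) ≠ (G.neighborSet v ∩ (S : Set V))) :
    Function.Injective (cfcrChi2 G S) :=
  fun _ _ h => cfcrChi1_injective G S hS (congrArg Prod.fst h)
end
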